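/- (Lemma 3, convergence rate over B-strongly connected graphs.) Let {G_k}_{k≥0} be a B-strongly connected sequence of directed graphs on n nodes, each containing all self-loops, with associated column-stochastic weight matrices {A_k}. Let θ ∈ ℝ^n, τ^1,…,τ^n > 0, θ* = (Σ_i τ^i θ^i)/(Σ_j τ^j), y_0 ∈ ℝ^n, and define the expected mean process τ_0 = τ, τ_{k+1} = A_k τ_k + τ, y_{k+1}^i = (Σ_j [A_k]_{ij} τ_k^j y_k^j + θ^i τ^i)/τ_{k+1}^i. Then there exists a constant K ≥ 0 such that |y_k^i − θ*| ≤ K/k for all k ≥ 1 and all i; in particular, y_k^i → θ* for every i. -/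

import Mathlib

open Finset Matrix

/-- Number of out-neighbors of `j` other than itself, in the digraph with edge set `E`. -/
def outDeg {n : ℕ} (E : Finset (Fin n × Fin n)) (j : Fin n) : ℕ :=
  (Finset.univ.filter fun i => (j, i) ∈ E ∧ i ≠ j).card

/-- Number of in-neighbors of `j` other than itself, in the digraph with edge set `E`. -/
def inDeg {n : ℕ} (E : Finset (Fin n × Fin n)) (j : Fin n) : ℕ :=
  (Finset.univ.filter fun i => (i, j) ∈ E ∧ i ≠ j).card

/-- The column-stochastic weight matrix associated with the edge set `E`:
`A i j = 1/(d_j + 1)` if `(j,i) ∈ E` and `0` otherwise. -/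
noncomputable def weightMatrix {n : ℕ} (E : Finset (Fin n × Fin n)) :
    Matrix (Fin n) (Fin n) ℝ :=
  Matrix.of fun i j => if (j, i) ∈ E then 1 / (outDeg E j + 1) else 0

/-- `prodA A t m = A (t+m) * A (t+m-1) * ⋯ * A t`, i.e. the backward product `A_{(t+m):t}`. -/
noncomputable def prodA {n : ℕ} (A : ℕ → Matrix (Fin n) (Fin n) ℝ) (t : ℕ) :
    ℕ → Matrix (Fin n) (Fin n) ℝ
  | 0 => A t
  | m + 1 => A (t + m + 1) * prodA A t m

/-- The digraph on `Fin n` with edge set `E` is strongly connected. -/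
def StronglyConnected {n : ℕ} (E : Finset (Fin n × Fin n)) : Prop :=
  ∀ i j : Fin n, Relation.ReflTransGen (fun a b => (a, b) ∈ E) i j

/-- The graph sequence `E` is `B`-strongly connected. -/
def BStronglyConnected {n : ℕ} (E : ℕ → Finset (Fin n × Fin n)) (B : ℕ) : Prop :=
  ∀ k : ℕ, StronglyConnected ((Finset.Ico (k * B) ((k + 1) * B)).biUnion E)

/-- Precision recursion of algorithm (5a): `τ_0 = τ`, `τ_{k+1} = A_k τ_k + τ`. -/
noncomputable def tauSeq {n : ℕ} (A : ℕ → Matrix (Fin n) (Fin n) ℝ) (τ : Fin n → ℝ) :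
    ℕ → Fin n → ℝ
  | 0 => τ
  | k + 1 => A k *ᵥ tauSeq A τ k + τ

/-- Mean recursion of algorithm (5b):
`θ_{k+1}^i = (Σ_j [A_k]_{ij} τ_k^j θ_k^j + s_{k+1}^i τ^i) / τ_{k+1}^i`. -/
noncomputable def thetaSeq {n : ℕ} (A : ℕ → Matrix (Fin n) (Fin n) ℝ) (τ : Fin n → ℝ)
    (θ0 : Fin n → ℝ) (s : ℕ → Fin n → ℝ) : ℕ → Fin n → ℝ
  | 0 => θ0
  | k + 1 => fun i =>
      ((∑ j, A k i j * tauSeq A τ k j * thetaSeq A τ θ0 s k j) + s (k + 1) i * τ i) /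
        tauSeq A τ (k + 1) i

/-!
Write `e_k = τ_k ⊙ (y_k - θ*)`. Clearing denominators in the recursion gives
`e_{k+1} = A_k e_k + c` with `c = τ ⊙ (θ - θ*)`, and `∑ c = 0` by the choice of `θ*`.
Split `e_k` into the homogeneous part started at `e_0` and the part driven by `c` from `0`.
Column-stochastic matrices do not increase the `ℓ¹` norm, which bounds the first part. In a
`B`-strongly connected sequence with self-loops, every product of `n B + 1` consecutive weight
matrices has all entries at least `δ = (1/n)^(nB+1)`. Such a product contracts zero-sum vectors
in `ℓ¹` by `1 - n δ`, which keeps the driven part bounded. The same positivity shows that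
`τ_k` grows linearly in `k`, so `|y_k - θ*| = |e_k| / τ_k = O(1/k)`.
-/

section WeightMatrix

variable {n : ℕ} (E : Finset (Fin n × Fin n))

lemma outDeg_add_one_le (j : Fin n) : outDeg E j + 1 ≤ n := by
  have hsub : (univ.filter fun i => (j, i) ∈ E ∧ i ≠ j) ⊆ univ.erase j :=
    fun i hi => mem_erase.mpr ⟨(mem_filter.mp hi).2.2, mem_univ i⟩
  have hcard := card_le_card hsub
  rw [card_erase_of_mem (mem_univ j), card_univ, Fintype.card_fin] at hcard
  unfold outDeg
  have := j.pos
  omega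

lemma weightMatrix_nonneg (i j : Fin n) : 0 ≤ weightMatrix E i j := by
  rw [weightMatrix, of_apply]
  split_ifs <;> positivity

lemma one_div_le_weightMatrix {i j : Fin n} (h : (j, i) ∈ E) :
    1 / (n : ℝ) ≤ weightMatrix E i j := by
  rw [weightMatrix, of_apply, if_pos h]
  gcongr
  exact_mod_cast outDeg_add_one_le E j

lemma weightMatrix_pos_iff {i j : Fin n} : 0 < weightMatrix E i j ↔ (j, i) ∈ E := by
  rw [weightMatrix, of_apply]
  split_ifs with h
  · simp only [h, iff_true]
    positivity
  · simp [h]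

lemma weightMatrix_mem_colStochastic (hloop : ∀ i, (i, i) ∈ E) :
    weightMatrix E ∈ colStochastic ℝ (Fin n) := by
  refine mem_colStochastic_iff_sum.mpr ⟨weightMatrix_nonneg E, fun j => ?_⟩
  have hout : univ.filter (fun i => (j, i) ∈ E) =
      insert j (univ.filter fun i => (j, i) ∈ E ∧ i ≠ j) := by
    ext i
    by_cases hij : i = j
    · subst hij; simp [hloop]
    · simp [hij]
  simp only [weightMatrix, of_apply]
  rw [← sum_filter, sum_const, hout, card_insert_of_notMem (by simp), ← outDeg, nsmul_eq_mul]
  push_cast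
  field_simp

end WeightMatrix

section L1Norm

variable {ι : Type*} [Fintype ι]

def l1Norm (x : ι → ℝ) : ℝ := ∑ i, |x i|

lemma l1Norm_nonneg (x : ι → ℝ) : 0 ≤ l1Norm x :=
  sum_nonneg fun i _ => abs_nonneg (x i)

@[simp]
lemma l1Norm_zero : l1Norm (0 : ι → ℝ) = 0 := by
  simp [l1Norm]

lemma abs_le_l1Norm (x : ι → ℝ) (i : ι) : |x i| ≤ l1Norm x :=
  single_le_sum (fun j _ => abs_nonneg (x j)) (mem_univ i)

lemma l1Norm_add_le (x y : ι → ℝ) : l1Norm (x + y) ≤ l1Norm x + l1Norm y := by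
  rw [l1Norm, l1Norm, l1Norm, ← sum_add_distrib]
  exact sum_le_sum fun i _ => abs_add_le (x i) (y i)

variable [DecidableEq ι]

/-- Shifting all entries of `M` down by `δ` keeps `M *ᵥ x` when `x` sums to zero; what is
left has column sums `1 - card ι * δ`. -/
lemma l1Norm_mulVec_le_of_sum_eq_zero {M : Matrix ι ι ℝ} {δ : ℝ}
    (hM : M ∈ colStochastic ℝ ι) (hδ : ∀ i j, δ ≤ M i j) {x : ι → ℝ} (hx : ∑ j, x j = 0) :
    l1Norm (M *ᵥ x) ≤ (1 - Fintype.card ι * δ) * l1Norm x := by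
  have hshift : ∀ i, (M *ᵥ x) i = ∑ j, (M i j - δ) * x j := fun i => by
    simp only [mulVec, dotProduct, sub_mul, sum_sub_distrib, ← mul_sum, hx, mul_zero, sub_zero]
  calc l1Norm (M *ᵥ x) ≤ ∑ i, ∑ j, (M i j - δ) * |x j| := by
        refine sum_le_sum fun i _ => ?_
        rw [hshift]
        refine (abs_sum_le_sum_abs _ _).trans (sum_le_sum fun j _ => ?_)
        rw [abs_mul, abs_of_nonneg (sub_nonneg.mpr (hδ i j))]
    _ = (1 - Fintype.card ι * δ) * l1Norm x := by
        rw [sum_comm, l1Norm, mul_sum]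
        refine sum_congr rfl fun j _ => ?_
        rw [← sum_mul, sum_sub_distrib, sum_col_of_mem_colStochastic hM, sum_const, card_univ,
          nsmul_eq_mul]

lemma l1Norm_mulVec_le {M : Matrix ι ι ℝ} (hM : M ∈ colStochastic ℝ ι) (x : ι → ℝ) :
    l1Norm (M *ᵥ x) ≤ l1Norm x := by
  calc l1Norm (M *ᵥ x) ≤ ∑ i, ∑ j, M i j * |x j| := by
        refine sum_le_sum fun i _ => (abs_sum_le_sum_abs _ _).trans (sum_le_sum fun j _ => ?_)
        rw [abs_mul, abs_of_nonneg (nonneg_of_mem_colStochastic hM)]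
    _ = l1Norm x := by
        simp only [l1Norm, sum_comm (γ := ι) (f := fun i j => M i j * |x j|), ← sum_mul,
          sum_col_of_mem_colStochastic hM, one_mul]

end L1Norm

section Products

variable {n : ℕ} {A : ℕ → Matrix (Fin n) (Fin n) ℝ}

lemma prodA_mem_colStochastic (hA : ∀ k, A k ∈ colStochastic ℝ (Fin n)) (t m : ℕ) :
    prodA A t m ∈ colStochastic ℝ (Fin n) := by
  induction m with
  | zero => exact hA t
  | succ m ih => exact Submonoid.mul_mem _ (hA _) ih

lemma prodA_succ_apply (t m : ℕ) (i j : Fin n) :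
    prodA A t (m + 1) i j = ∑ l, A (t + m + 1) i l * prodA A t m l j :=
  mul_apply

lemma prodA_nonneg (hA : ∀ k i j, 0 ≤ A k i j) (t m : ℕ) (i j : Fin n) :
    0 ≤ prodA A t m i j := by
  induction m generalizing i with
  | zero => exact hA t i j
  | succ m ih =>
    rw [prodA_succ_apply]
    exact sum_nonneg fun l _ => mul_nonneg (hA _ i l) (ih l)

lemma pow_le_prodA_of_pos {d : ℝ} (hd : 0 ≤ d) (hA : ∀ k i j, 0 ≤ A k i j)
    (hAd : ∀ k i j, 0 < A k i j → d ≤ A k i j) (t m : ℕ) {i j : Fin n}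
    (hpos : 0 < prodA A t m i j) : d ^ (m + 1) ≤ prodA A t m i j := by
  induction m generalizing i with
  | zero => simpa [prodA] using hAd t i j hpos
  | succ m ih =>
    have hterm : ∀ l, 0 ≤ A (t + m + 1) i l * prodA A t m l j := fun l =>
      mul_nonneg (hA _ i l) (prodA_nonneg hA t m l j)
    rw [prodA_succ_apply] at hpos ⊢
    obtain ⟨l, -, hl⟩ := (sum_pos_iff_of_nonneg fun l _ => hterm l).mp hpos
    have hAl : 0 < A (t + m + 1) i l := pos_of_mul_pos_left hl (prodA_nonneg hA t m l j)
    have hPl : 0 < prodA A t m l j := pos_of_mul_pos_right hl (hA _ i l)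
    calc d ^ (m + 1 + 1) = d * d ^ (m + 1) := pow_succ' d (m + 1)
      _ ≤ A (t + m + 1) i l * prodA A t m l j :=
          mul_le_mul (hAd _ i l hAl) (ih hPl) (by positivity) (hA _ i l)
      _ ≤ _ := single_le_sum (fun l _ => hterm l) (mem_univ l)

end Products

lemma StronglyConnected.eq_univ_of_closed {n : ℕ} {F : Finset (Fin n × Fin n)}
    (hF : StronglyConnected F) {S : Finset (Fin n)} {j : Fin n} (hj : j ∈ S)
    (hS : ∀ a b, (a, b) ∈ F → a ∈ S → b ∈ S) : S = univ := by
  refine eq_univ_of_forall fun i => ?_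
  induction hF j i with
  | refl => exact hj
  | tail _ hab ih => exact hS _ _ hab ih

section Connectivity

variable {n B : ℕ} {E : ℕ → Finset (Fin n × Fin n)} {A : ℕ → Matrix (Fin n) (Fin n) ℝ}
  (hA : ∀ k i j, 0 ≤ A k i j) (hE : ∀ k i j, (j, i) ∈ E k → 0 < A k i j)
include hA hE

lemma prodA_succ_pos_of_edge {t m : ℕ} {i j l : Fin n} (hl : 0 < prodA A t m l j)
    (hedge : (l, i) ∈ E (t + m + 1)) : 0 < prodA A t (m + 1) i j := by
  rw [prodA_succ_apply]
  exact (sum_pos_iff_of_nonneg fun l _ => mul_nonneg (hA _ i l) (prodA_nonneg hA t m l j)).mpr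
    ⟨l, mem_univ l, mul_pos (hE _ i l hedge) hl⟩

variable (hloop : ∀ k i, (i, i) ∈ E k)
include hloop

lemma prodA_pos_mono {t m m' : ℕ} (hm : m ≤ m') {i j : Fin n} (hpos : 0 < prodA A t m i j) :
    0 < prodA A t m' i j := by
  induction m', hm using Nat.le_induction with
  | base => exact hpos
  | succ m' _ ih => exact prodA_succ_pos_of_edge hA hE ih (hloop _ i)

lemma prodA_self_pos (t m : ℕ) (j : Fin n) : 0 < prodA A t m j j :=
  prodA_pos_mono hA hE hloop m.zero_le (hE t j j (hloop t j))

noncomputable abbrev reached (A : ℕ → Matrix (Fin n) (Fin n) ℝ) (t m : ℕ) (j : Fin n) :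
    Finset (Fin n) :=
  univ.filter fun i => 0 < prodA A t m i j

/-- An unchanged reached set would be closed under the edges of the strongly connected union
graph of the `k`-th window. -/
lemma reached_ssubset_or_eq_univ (hconn : BStronglyConnected E B) {t m m' k : ℕ} (j : Fin n)
    (hstart : t + m + 1 ≤ k * B) (hend : (k + 1) * B ≤ t + m' + 1) :
    reached A t m j ⊂ reached A t m' j ∨ reached A t m' j = univ := by
  have hkB : k * B ≤ (k + 1) * B := Nat.mul_le_mul_right B k.le_succ
  have hsub : reached A t m j ⊆ reached A t m' j := fun i hi => by
    simp only [mem_filter, mem_univ, true_and] at hi ⊢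
    exact prodA_pos_mono hA hE hloop (by omega) hi
  refine (hsub.ssubset_or_eq).imp_right fun heq => ?_
  refine (hconn k).eq_univ_of_closed (j := j) (by simpa using prodA_self_pos hA hE hloop t m' j)
    fun a b hab ha => ?_
  obtain ⟨s, hs, hedge⟩ := mem_biUnion.mp hab
  rw [mem_Ico] at hs
  rw [← heq] at ha
  simp only [mem_filter, mem_univ, true_and] at ha ⊢
  have ha' : 0 < prodA A t (s - t - 1) a j := prodA_pos_mono hA hE hloop (by omega) ha
  have hb : 0 < prodA A t (s - t - 1 + 1) b j :=
    prodA_succ_pos_of_edge hA hE ha' (by rwa [show t + (s - t - 1) + 1 = s by omega])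
  exact prodA_pos_mono hA hE hloop (by omega) hb

lemma min_le_card_reached (hconn : BStronglyConnected E B) {t k : ℕ} (j : Fin n)
    (hk : t + 1 ≤ k * B) (r : ℕ) {m : ℕ} (hm : (k + r) * B ≤ t + m + 1) :
    min (r + 1) n ≤ #(reached A t m j) := by
  induction r generalizing m with
  | zero =>
    have : j ∈ reached A t m j := by simpa using prodA_self_pos hA hE hloop t m j
    have := card_pos.mpr ⟨j, this⟩
    omega
  | succ r ih =>
    have hkr : k * B ≤ (k + r) * B := Nat.mul_le_mul_right B (by omega)
    have hblock : (k + r + 1) * B = (k + r) * B + B := by ring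
    have hrB : (k + (r + 1)) * B = (k + r) * B + B := by ring
    set m₀ := (k + r) * B - t - 1
    have hm₀ : t + m₀ + 1 = (k + r) * B := by omega
    have hprev := ih hm₀.ge
    rcases reached_ssubset_or_eq_univ hA hE hloop hconn j hm₀.le (hblock ▸ hrB ▸ hm)
      with hlt | huniv
    · have := card_lt_card hlt
      omega
    · rw [huniv, card_univ, Fintype.card_fin]
      omega

lemma prodA_pos_of_le (hB : 0 < B) (hconn : BStronglyConnected E B) {t m : ℕ}
    (hm : n * B ≤ m + 1) (i j : Fin n) : 0 < prodA A t m i j := by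
  have hn : n - 1 + 1 = n := Nat.sub_add_cancel j.pos
  have hdiv := Nat.div_add_mod t B
  have hmod := Nat.mod_lt t hB
  have hstart : (t / B + 1) * B = B * (t / B) + B := by ring
  have hend : (t / B + 1 + (n - 1)) * B = B * (t / B) + (n - 1 + 1) * B := by ring
  rw [hn] at hend
  -- `t / B + 1` is the first window starting after time `t`.
  have hcard := min_le_card_reached hA hE hloop hconn (t := t) (k := t / B + 1) j (by omega)
    (n - 1) (m := m) (by omega)
  have huniv : reached A t m j = univ := eq_univ_of_card _ (by
    have := card_le_univ (reached A t m j)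
    simp only [Fintype.card_fin] at this ⊢
    omega)
  have hi : i ∈ reached A t m j := huniv ▸ mem_univ i
  simpa using hi

end Connectivity

lemma one_div_pow_le_prodA_of_weightMatrix {n B : ℕ} {E : ℕ → Finset (Fin n × Fin n)}
    {A : ℕ → Matrix (Fin n) (Fin n) ℝ} (hB : 0 < B) (hloop : ∀ k i, (i, i) ∈ E k)
    (hconn : BStronglyConnected E B) (hA : ∀ k, A k = weightMatrix (E k)) (t : ℕ) (i j : Fin n) :
    (1 / n : ℝ) ^ (n * B + 1) ≤ prodA A t (n * B) i j := by
  have hA₀ : ∀ k i j, 0 ≤ A k i j := fun k i j => hA k ▸ weightMatrix_nonneg (E k) i j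
  have hpos : ∀ k i j, 0 < A k i j ↔ (j, i) ∈ E k := fun k i j => hA k ▸ weightMatrix_pos_iff _
  refine pow_le_prodA_of_pos (d := 1 / n) (by positivity) hA₀ (fun k i j h => ?_) t (n * B)
    (prodA_pos_of_le hA₀ (fun k i j => (hpos k i j).mpr) hloop hB hconn (by omega) i j)
  rw [hA]
  exact one_div_le_weightMatrix _ ((hpos k i j).mp h)

noncomputable def linSeq {n : ℕ} (A : ℕ → Matrix (Fin n) (Fin n) ℝ) (x₀ c : Fin n → ℝ) :
    ℕ → Fin n → ℝ
  | 0 => x₀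
  | k + 1 => A k *ᵥ linSeq A x₀ c k + c

section LinSeq

variable {n : ℕ} {A : ℕ → Matrix (Fin n) (Fin n) ℝ}

lemma tauSeq_eq_linSeq (τ : Fin n → ℝ) : tauSeq A τ = linSeq A τ τ := by
  funext k
  induction k with
  | zero => rfl
  | succ k ih => simp only [tauSeq, linSeq, ih]

lemma linSeq_add (x₀ x₀' c c' : Fin n → ℝ) (k : ℕ) :
    linSeq A (x₀ + x₀') (c + c') k = linSeq A x₀ c k + linSeq A x₀' c' k := by
  induction k with
  | zero => rfl
  | succ k ih => simp only [linSeq, ih, mulVec_add]; abel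

lemma linSeq_nonneg (hA : ∀ k i j, 0 ≤ A k i j) {x₀ c : Fin n → ℝ} (hx₀ : 0 ≤ x₀) (hc : 0 ≤ c)
    (k : ℕ) : 0 ≤ linSeq A x₀ c k := by
  induction k with
  | zero => exact hx₀
  | succ k ih =>
    refine add_nonneg (fun i => ?_) hc
    show 0 ≤ ∑ j, A k i j * linSeq A x₀ c k j
    exact sum_nonneg fun j _ => mul_nonneg (hA k i j) (ih j)

lemma le_linSeq_succ (hA : ∀ k i j, 0 ≤ A k i j) {x₀ c : Fin n → ℝ} (hx₀ : 0 ≤ x₀) (hc : 0 ≤ c)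
    (k : ℕ) : c ≤ linSeq A x₀ c (k + 1) := by
  refine le_add_of_nonneg_left fun i => ?_
  show 0 ≤ ∑ j, A k i j * linSeq A x₀ c k j
  exact sum_nonneg fun j _ => mul_nonneg (hA k i j) (linSeq_nonneg hA hx₀ hc k j)

lemma linSeq_add_succ (x₀ c : Fin n → ℝ) (t m : ℕ) :
    linSeq A x₀ c (t + m + 1) =
      prodA A t m *ᵥ linSeq A x₀ c t + linSeq (fun k => A (t + k)) 0 c (m + 1) := by
  induction m with
  | zero => simp [linSeq, prodA]
  | succ m ih =>
    change A (t + m + 1) *ᵥ linSeq A x₀ c (t + m + 1) + c =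
      (A (t + m + 1) * prodA A t m) *ᵥ linSeq A x₀ c t +
        (A (t + (m + 1)) *ᵥ linSeq (fun k => A (t + k)) 0 c (m + 1) + c)
    rw [ih, mulVec_add, mulVec_mulVec, add_assoc]
    rfl

variable (hA : ∀ k, A k ∈ colStochastic ℝ (Fin n))
include hA

lemma sum_linSeq (x₀ c : Fin n → ℝ) (k : ℕ) :
    ∑ i, linSeq A x₀ c k i = ∑ i, x₀ i + k * ∑ i, c i := by
  induction k with
  | zero => simp [linSeq]
  | succ k ih =>
    simp only [linSeq, Pi.add_apply, sum_add_distrib, sum_mulVec_of_mem_colStochastic (hA k), ih]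
    push_cast
    ring

lemma l1Norm_linSeq_le (x₀ c : Fin n → ℝ) (k : ℕ) :
    l1Norm (linSeq A x₀ c k) ≤ l1Norm x₀ + k * l1Norm c := by
  induction k with
  | zero => simp [linSeq]
  | succ k ih =>
    calc l1Norm (linSeq A x₀ c (k + 1)) ≤ l1Norm (linSeq A x₀ c k) + l1Norm c :=
          (l1Norm_add_le _ _).trans (add_le_add_left (l1Norm_mulVec_le (hA k) _) _)
      _ ≤ l1Norm x₀ + (k + 1 : ℕ) * l1Norm c := by push_cast; linarith

end LinSeq

lemma mul_sum_le_mulVec {ι : Type*} [Fintype ι] {M : Matrix ι ι ℝ} {δ : ℝ} {i : ι}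
    (hδ : ∀ j, δ ≤ M i j) {x : ι → ℝ} (hx : 0 ≤ x) : δ * ∑ j, x j ≤ (M *ᵥ x) i := by
  rw [mul_sum]
  exact sum_le_sum fun j _ => mul_le_mul_of_nonneg_right (hδ j) (hx j)

lemma le_tauSeq {n : ℕ} {A : ℕ → Matrix (Fin n) (Fin n) ℝ} (hA : ∀ k i j, 0 ≤ A k i j)
    {τ : Fin n → ℝ} (hτ : 0 ≤ τ) : ∀ k, τ ≤ tauSeq A τ k
  | 0 => le_rfl
  | k + 1 => tauSeq_eq_linSeq (A := A) τ ▸ le_linSeq_succ hA hτ hτ k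

lemma tauSeq_mul_thetaSeq_sub {n : ℕ} {A : ℕ → Matrix (Fin n) (Fin n) ℝ}
    (hA : ∀ k i j, 0 ≤ A k i j) {τ : Fin n → ℝ} (hτ : ∀ i, 0 < τ i) (θ₀ θ : Fin n → ℝ) (a : ℝ)
    (k : ℕ) (i : Fin n) :
    tauSeq A τ k i * (thetaSeq A τ θ₀ (fun _ => θ) k i - a) =
      linSeq A (fun i => τ i * (θ₀ i - a)) (fun i => τ i * (θ i - a)) k i := by
  induction k generalizing i with
  | zero => rfl
  | succ k ih =>
    have hpos : 0 < tauSeq A τ (k + 1) i :=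
      (hτ i).trans_le (le_tauSeq hA (fun i => (hτ i).le) (k + 1) i)
    have htau : tauSeq A τ (k + 1) i = ∑ j, A k i j * tauSeq A τ k j + τ i := rfl
    simp only [thetaSeq, linSeq, Pi.add_apply, mulVec, dotProduct, ← ih]
    rw [mul_sub, mul_div_cancel₀ _ hpos.ne', htau]
    simp only [mul_sub, sum_sub_distrib, add_mul, sum_mul, mul_assoc]
    ring

section UniformWindow

variable {n m : ℕ} {A : ℕ → Matrix (Fin n) (Fin n) ℝ} {δ : ℝ}
  (hA : ∀ k, A k ∈ colStochastic ℝ (Fin n)) (hδ : ∀ t i j, δ ≤ prodA A t m i j)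
include hA hδ

lemma natCast_mul_le_one (hn : 0 < n) : (n : ℝ) * δ ≤ 1 := by
  let j : Fin n := ⟨0, hn⟩
  calc (n : ℝ) * δ = ∑ _i : Fin n, δ := by simp
    _ ≤ ∑ i, prodA A 0 m i j := sum_le_sum fun i _ => hδ 0 i j
    _ = 1 := sum_col_of_mem_colStochastic (prodA_mem_colStochastic hA 0 m) j

/-- Each window of `m + 1` steps contracts a zero-sum state by the factor `1 - n δ` and adds
at most `(m + 1) ‖c‖₁`, so the bound is the fixed point `R = (1 - n δ) R + (m + 1) ‖c‖₁`. -/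
lemma l1Norm_linSeq_zero_le_of_sum_eq_zero (hn : 0 < n) (hδ₀ : 0 < δ) {c : Fin n → ℝ}
    (hc : ∑ i, c i = 0) (k : ℕ) :
    l1Norm (linSeq A 0 c k) ≤ (m + 1) * l1Norm c / (n * δ) := by
  have hnδ : (0 : ℝ) < n * δ := by positivity
  have hnδ₁ := natCast_mul_le_one hA hδ hn
  set R := (m + 1) * l1Norm c / (n * δ)
  have hR : (m + 1) * l1Norm c = n * δ * R := (mul_div_cancel₀ _ hnδ.ne').symm
  have hR₀ : 0 ≤ R := by have := l1Norm_nonneg c; positivity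
  induction k using Nat.strong_induction_on with
  | _ k ih =>
    rcases lt_or_ge k (m + 1) with hk | hk
    · calc l1Norm (linSeq A 0 c k) ≤ l1Norm 0 + k * l1Norm c := l1Norm_linSeq_le hA 0 c k
        _ ≤ (m + 1) * l1Norm c := by
            rw [l1Norm_zero, zero_add]
            gcongr
            · exact l1Norm_nonneg c
            · exact_mod_cast hk.le
        _ ≤ R := by rw [hR]; exact mul_le_of_le_one_left hR₀ hnδ₁
    · obtain ⟨t, rfl⟩ : ∃ t, k = t + m + 1 := ⟨k - (m + 1), by omega⟩
      have hsum : ∑ i, linSeq A 0 c t i = 0 := by simp [sum_linSeq hA, hc]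
      rw [linSeq_add_succ]
      calc _ ≤ l1Norm (prodA A t m *ᵥ linSeq A 0 c t) +
            l1Norm (linSeq (fun k => A (t + k)) 0 c (m + 1)) := l1Norm_add_le _ _
        _ ≤ (1 - n * δ) * l1Norm (linSeq A 0 c t) + (m + 1) * l1Norm c := by
            gcongr
            · simpa using l1Norm_mulVec_le_of_sum_eq_zero (prodA_mem_colStochastic hA t m)
                (hδ t) hsum
            · simpa using l1Norm_linSeq_le (fun k => hA (t + k)) 0 c (m + 1)
        _ ≤ (1 - n * δ) * R + n * δ * R := by
            rw [hR]
            gcongr (?_ : ℝ) + _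
            exact mul_le_mul_of_nonneg_left (ih t (by omega)) (by linarith)
        _ = R := by ring

lemma mul_le_tauSeq {τ : Fin n → ℝ} (hτ : 0 ≤ τ) (t : ℕ) (i : Fin n) :
    δ * ((t + 1) * ∑ j, τ j) ≤ tauSeq A τ (t + m + 1) i := by
  have hA₀ : ∀ k i j, 0 ≤ A k i j := fun k _ _ => nonneg_of_mem_colStochastic (hA k)
  have hsum : ∑ j, linSeq A τ τ t j = (t + 1) * ∑ j, τ j := by
    rw [sum_linSeq hA]; ring
  rw [tauSeq_eq_linSeq, linSeq_add_succ, Pi.add_apply, ← hsum]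
  exact le_add_of_le_of_nonneg (mul_sum_le_mulVec (hδ t i) (linSeq_nonneg hA₀ hτ hτ t))
    (linSeq_nonneg (fun k => hA₀ (t + k)) le_rfl hτ _ i)

lemma exists_pos_mul_le_tauSeq (hn : 0 < n) (hδ₀ : 0 < δ) {τ : Fin n → ℝ}
    (hτ : ∀ i, 0 < τ i) : ∃ a > 0, ∀ k i, a * k ≤ tauSeq A τ k i := by
  have hA₀ : ∀ k i j, 0 ≤ A k i j := fun k _ _ => nonneg_of_mem_colStochastic (hA k)
  have hne : (univ : Finset (Fin n)).Nonempty := ⟨⟨0, hn⟩, mem_univ _⟩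
  set τmin := univ.inf' hne τ
  have hτmin : 0 < τmin := (lt_inf'_iff hne).mpr fun i _ => hτ i
  have hT : 0 < ∑ j, τ j := sum_pos (fun i _ => hτ i) hne
  set b := min τmin (δ * ∑ j, τ j)
  have hb : 0 < b := lt_min hτmin (by positivity)
  refine ⟨b / (m + 1), by positivity, fun k i => ?_⟩
  rcases le_or_gt k m with hk | hk
  · calc b / (m + 1) * k ≤ b := by
          rw [div_mul_eq_mul_div, div_le_iff₀ (by positivity)]
          gcongr
          exact_mod_cast hk.trans (Nat.le_succ m)
      _ ≤ τmin := min_le_left _ _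
      _ ≤ τ i := inf'_le τ (mem_univ i)
      _ ≤ tauSeq A τ k i := le_tauSeq hA₀ (fun i => (hτ i).le) k i
  · obtain ⟨t, rfl⟩ : ∃ t, k = t + m + 1 := ⟨k - (m + 1), by omega⟩
    have hwin : ((t + m + 1 : ℕ) : ℝ) ≤ (t + 1) * (m + 1) := by
      push_cast
      nlinarith [t.cast_nonneg (α := ℝ), m.cast_nonneg (α := ℝ)]
    calc b / (m + 1) * ↑(t + m + 1) ≤ b * (t + 1) := by
          rw [div_mul_eq_mul_div, div_le_iff₀ (by positivity), mul_assoc]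
          exact mul_le_mul_of_nonneg_left hwin hb.le
      _ ≤ (δ * ∑ j, τ j) * (t + 1) :=
          mul_le_mul_of_nonneg_right (min_le_right _ _) (by positivity)
      _ = δ * ((t + 1) * ∑ j, τ j) := by ring
      _ ≤ tauSeq A τ (t + m + 1) i := mul_le_tauSeq hA hδ (fun i => (hτ i).le) t i

lemma exists_abs_tauSeq_mul_thetaSeq_sub_le (hn : 0 < n) (hδ₀ : 0 < δ) {τ : Fin n → ℝ}
    (hτ : ∀ i, 0 < τ i) (θ₀ θ : Fin n → ℝ) {a : ℝ} (hc : ∑ i, τ i * (θ i - a) = 0) :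
    ∃ C, 0 ≤ C ∧ ∀ k i, |tauSeq A τ k i * (thetaSeq A τ θ₀ (fun _ => θ) k i - a)| ≤ C := by
  set e₀ : Fin n → ℝ := fun i => τ i * (θ₀ i - a)
  set c : Fin n → ℝ := fun i => τ i * (θ i - a)
  have hnδ : (0 : ℝ) < n * δ := by positivity
  refine ⟨l1Norm e₀ + (m + 1) * l1Norm c / (n * δ),
    add_nonneg (l1Norm_nonneg e₀) (by have := l1Norm_nonneg c; positivity), fun k i => ?_⟩
  have hfree : l1Norm (linSeq A e₀ 0 k) ≤ l1Norm e₀ := by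
    simpa using l1Norm_linSeq_le hA e₀ 0 k
  rw [tauSeq_mul_thetaSeq_sub (fun k _ _ => nonneg_of_mem_colStochastic (hA k)) hτ,
    show linSeq A e₀ c k = linSeq A (e₀ + 0) (0 + c) k by simp, linSeq_add]
  calc _ ≤ l1Norm (linSeq A e₀ 0 k + linSeq A 0 c k) := abs_le_l1Norm _ i
    _ ≤ l1Norm (linSeq A e₀ 0 k) + l1Norm (linSeq A 0 c k) := l1Norm_add_le _ _
    _ ≤ _ := add_le_add hfree (l1Norm_linSeq_zero_le_of_sum_eq_zero hA hδ hn hδ₀ hc k)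

end UniformWindow

lemma sum_mul_sub_weightedMean {n : ℕ} (τ θ : Fin n → ℝ) (hτ : ∑ j, τ j ≠ 0) :
    ∑ i, τ i * (θ i - (∑ i, τ i * θ i) / ∑ j, τ j) = 0 := by
  simp only [mul_sub, sum_sub_distrib, ← sum_mul]
  field_simp
  ring

lemma tendsto_of_abs_sub_le_div {u : ℕ → ℝ} {l K : ℝ} (h : ∀ k : ℕ, 1 ≤ k → |u k - l| ≤ K / k) :
    Filter.Tendsto u Filter.atTop (nhds l) := by
  rw [← tendsto_sub_nhds_zero_iff]
  refine squeeze_zero_norm' ?_ (tendsto_const_div_atTop_nhds_zero_nat K)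
  filter_upwards [Filter.eventually_ge_atTop 1] with k hk
  exact h k hk

theorem expected_mean_process_rate_over_B_strongly_connected
    (n B : ℕ) (hn : 1 ≤ n) (hB : 1 ≤ B)
    (E : ℕ → Finset (Fin n × Fin n)) (hloop : ∀ k i, (i, i) ∈ E k)
    (hconn : BStronglyConnected E B)
    (A : ℕ → Matrix (Fin n) (Fin n) ℝ) (hA : ∀ k, A k = weightMatrix (E k))
    (θ : Fin n → ℝ) (τ : Fin n → ℝ) (hτ : ∀ i, 0 < τ i)
    (θstar : ℝ) (hθstar : θstar = (∑ i, τ i * θ i) / (∑ j, τ j))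
    (y0 : Fin n → ℝ)
    (y : ℕ → Fin n → ℝ) (hy : ∀ k i, y k i = thetaSeq A τ y0 (fun _ => θ) k i) :
    (∃ K : ℝ, 0 ≤ K ∧ ∀ k : ℕ, 1 ≤ k → ∀ i, |y k i - θstar| ≤ K / (k : ℝ)) ∧
    ∀ i, Filter.Tendsto (fun k => y k i) Filter.atTop (nhds θstar) := by
  have hstoch : ∀ k, A k ∈ colStochastic ℝ (Fin n) := fun k =>
    hA k ▸ weightMatrix_mem_colStochastic (E k) (hloop k)
  have hδ := one_div_pow_le_prodA_of_weightMatrix hB hloop hconn hA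
  have hδ₀ : (0 : ℝ) < (1 / n) ^ (n * B + 1) := by
    have : (0 : ℝ) < n := by exact_mod_cast hn
    positivity
  have hT : ∑ j, τ j ≠ 0 := (sum_pos (fun i _ => hτ i) ⟨⟨0, hn⟩, mem_univ _⟩).ne'
  obtain ⟨a, ha, hτk⟩ := exists_pos_mul_le_tauSeq hstoch hδ hn hδ₀ hτ
  obtain ⟨C, hC₀, hC⟩ := exists_abs_tauSeq_mul_thetaSeq_sub_le hstoch hδ hn hδ₀ hτ y0 θ
    (hθstar ▸ sum_mul_sub_weightedMean τ θ hT)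
  have hrate : ∀ k : ℕ, 1 ≤ k → ∀ i, |y k i - θstar| ≤ C / a / k := by
    intro k hk i
    have hak : 0 < a * k := mul_pos ha (by exact_mod_cast hk)
    have hτpos := hak.trans_le (hτk k i)
    calc |y k i - θstar| ≤ C / tauSeq A τ k i := by
          rw [le_div_iff₀ hτpos, mul_comm, ← abs_of_pos hτpos, ← abs_mul, hy]
          exact hC k i
      _ ≤ C / (a * k) := div_le_div_of_nonneg_left hC₀ hak (hτk k i)
      _ = C / a / k := (div_div C a k).symm
  exact ⟨⟨C / a, div_nonneg hC₀ ha.le, hrate⟩,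
    fun i => tendsto_of_abs_sub_le_div fun k hk => hrate k hk i⟩
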